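/- Let k be a field, let λ ∈ k⟦y⟧ be a unit, let A₁, …, Aₙ ∈ k⟦y⟧, let e₁, …, eₙ, e be positive integers, let B ∈ k⟦x,y,z⟧, and set ȳ = y·λ(y) + Σ_{j=1}^n A_j(y)·x^{e_j} + x^e·B ∈ k⟦x,y,z⟧. Then there exist a power series P ∈ k⟦Y, T₁, …, Tₙ⟧ with zero constant term and a power series Ω ∈ k⟦x,y,z⟧ such that y = P(ȳ, x^{e₁}, …, x^{eₙ}) + x^e·Ω holds in k⟦x,y,z⟧, where P(ȳ, x^{e₁}, …, x^{eₙ}) denotes the substitution Y ↦ ȳ, T_j ↦ x^{e_j} (legitimate because ȳ and the x^{e_j} have zero constant term). -/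

import Mathlib

/-- The embedding of `k⟦y⟧` into `k⟦x,y,z⟧` sending `y` to the middle variable. -/
noncomputable def embY {k : Type*} [CommRing k] (f : PowerSeries k) :
    MvPowerSeries (Fin 3) k :=
  fun m => if m 0 = 0 ∧ m 2 = 0 then PowerSeries.coeff (m 1) f else 0

/-- Substitution of a family of power series `A j` (of positive order and zero constant
term) for the variables of an `n`-variable power series `P`: the coefficient of
`P(A₀,…,A_{n-1})` at `m` is the (finitely supported) sum of the contributions of the terms
`P_p ∏_j (A j)^(p j)`. -/
noncomputable def substFam {k : Type*} [CommRing k] {n : ℕ}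
    (P : MvPowerSeries (Fin n) k) (A : Fin n → MvPowerSeries (Fin 3) k) :
    MvPowerSeries (Fin 3) k :=
  fun m => ∑ᶠ p : Fin n →₀ ℕ,
    MvPowerSeries.coeff p P * MvPowerSeries.coeff m (∏ j, (A j) ^ (p j))

open MvPowerSeries Finsupp

namespace IterSub

variable {k : Type*} [Field k] {n : ℕ}

theorem mul_supp {u v : MvPowerSeries (Fin 3) k}
    {P Q R : (Fin 3 →₀ ℕ) → Prop}
    (h : ∀ p q, P p → Q q → R (p + q))
    (hu : ∀ p, MvPowerSeries.coeff p u ≠ 0 → P p)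
    (hv : ∀ q, MvPowerSeries.coeff q v ≠ 0 → Q q) :
    ∀ m, MvPowerSeries.coeff m (u * v) ≠ 0 → R m := by
  classical
  intro m hm
  rw [MvPowerSeries.coeff_mul] at hm
  obtain ⟨pq, hmem, hne⟩ := Finset.exists_ne_zero_of_sum_ne_zero hm
  rw [Finset.HasAntidiagonal.mem_antidiagonal] at hmem
  have := h _ _ (hu _ (left_ne_zero_of_mul hne)) (hv _ (right_ne_zero_of_mul hne))
  rwa [hmem] at this

theorem coeff_mul_X_pow (u : MvPowerSeries (Fin 3) k) (i : Fin 3) (a : ℕ) (m : Fin 3 →₀ ℕ) :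
    MvPowerSeries.coeff m (u * (MvPowerSeries.X i) ^ a) =
      if a ≤ m i then MvPowerSeries.coeff (m - single i a) u else 0 := by
  rw [MvPowerSeries.X_pow_eq, MvPowerSeries.coeff_mul_monomial]
  by_cases h : a ≤ m i
  · rw [if_pos (single_le_iff.mpr h), if_pos h, mul_one]
  · rw [if_neg (fun hc => h (single_le_iff.mp hc)), if_neg h]

theorem embY_supp (f : PowerSeries k) (p : Fin 3 →₀ ℕ)
    (h : MvPowerSeries.coeff p (embY f) ≠ 0) : p 0 = 0 ∧ p 2 = 0 := by
  rw [MvPowerSeries.coeff_apply] at h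
  unfold embY at h
  by_contra hc
  rw [if_neg hc] at h
  exact h rfl

theorem X_supp (i : Fin 3) (p : Fin 3 →₀ ℕ)
    (h : MvPowerSeries.coeff (R := k) p (MvPowerSeries.X i) ≠ 0) : p = single i 1 := by
  classical
  rw [MvPowerSeries.coeff_X] at h
  by_contra hc; rw [if_neg hc] at h; exact h rfl

theorem X_pow_supp (i : Fin 3) (a : ℕ) (p : Fin 3 →₀ ℕ)
    (h : MvPowerSeries.coeff (R := k) p ((MvPowerSeries.X i) ^ a) ≠ 0) : p = single i a := by
  classical
  rw [MvPowerSeries.X_pow_eq, MvPowerSeries.coeff_monomial] at h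
  by_contra hc; rw [if_neg hc] at h; exact h rfl

theorem one_supp (p : Fin 3 →₀ ℕ)
    (h : MvPowerSeries.coeff p (1 : MvPowerSeries (Fin 3) k) ≠ 0) : p = 0 := by
  classical
  rw [MvPowerSeries.coeff_one] at h
  by_contra hc; rw [if_neg hc] at h; exact h rfl

/-- the main two-variable series `W` -/
noncomputable def Wser (lam : PowerSeries k) (A : Fin n → PowerSeries k) (e : Fin n → ℕ) :
    MvPowerSeries (Fin 3) k :=
  MvPowerSeries.X 1 * embY lam + ∑ j : Fin n, embY (A j) * (MvPowerSeries.X 0) ^ (e j)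

/-- numerical semigroup generated by the `e j` -/
def Sgrp (e : Fin n → ℕ) : AddSubmonoid ℕ := AddSubmonoid.closure (Set.range e)

theorem mem_Sgrp (e : Fin n → ℕ) (j : Fin n) : e j ∈ Sgrp e :=
  AddSubmonoid.subset_closure (Set.mem_range_self j)

theorem Sgrp_exists (e : Fin n → ℕ) (a : ℕ) (ha : a ∈ Sgrp e) :
    ∃ q : Fin n → ℕ, ∑ j, e j * q j = a := by
  induction ha using AddSubmonoid.closure_induction with
  | mem x hx =>
    obtain ⟨j, rfl⟩ := hx
    refine ⟨Pi.single j 1, ?_⟩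
    rw [Finset.sum_eq_single j]
    · simp
    · intro i _ hij
      simp [Pi.single_eq_of_ne hij]
    · simp
  | zero => exact ⟨0, by simp⟩
  | add x y _ _ ihx ihy =>
    obtain ⟨qx, hx⟩ := ihx
    obtain ⟨qy, hy⟩ := ihy
    exact ⟨qx + qy, by simp [Pi.add_apply, mul_add, Finset.sum_add_distrib, hx, hy]⟩

open Classical in
/-- a choice of representation of `a` as `∑ e j * q j` -/
noncomputable def repf (e : Fin n → ℕ) (a : ℕ) : Fin n → ℕ :=
  if h : ∃ q : Fin n → ℕ, ∑ j, e j * q j = a then h.choose else 0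

theorem repf_spec (e : Fin n → ℕ) (a : ℕ) (ha : a ∈ Sgrp e) :
    ∑ j, e j * repf e a j = a := by
  classical
  have h := Sgrp_exists e a ha
  rw [repf, dif_pos h]
  exact h.choose_spec

theorem Wser_supp (lam : PowerSeries k) (A : Fin n → PowerSeries k) (e : Fin n → ℕ)
    (he : ∀ j, 0 < e j) (p : Fin 3 →₀ ℕ)
    (h : MvPowerSeries.coeff p (Wser lam A e) ≠ 0) :
    p 2 = 0 ∧ 1 ≤ p 0 + p 1 ∧ p 0 ∈ Sgrp e := by
  classical
  unfold Wser at h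
  rw [map_add] at h
  have h' : MvPowerSeries.coeff p (MvPowerSeries.X 1 * embY lam) ≠ 0 ∨
      MvPowerSeries.coeff p (∑ j : Fin n, embY (A j) * (MvPowerSeries.X 0) ^ (e j)) ≠ 0 := by
    by_contra hc; push_neg at hc; rw [hc.1, hc.2, add_zero] at h; exact h rfl
  rcases h' with h1 | h2
  · refine mul_supp (P := fun p => p = single 1 1) (Q := fun q => q 0 = 0 ∧ q 2 = 0)
      (R := fun m => m 2 = 0 ∧ 1 ≤ m 0 + m 1 ∧ m 0 ∈ Sgrp e)
      ?_ (X_supp 1) (embY_supp lam) p h1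
    intro p q hp hq
    subst hp
    refine ⟨?_, ?_, ?_⟩
    · simp [Finsupp.add_apply, hq.2]
    · simp only [Finsupp.add_apply, Finsupp.single_eq_same]
      omega
    · simp only [Finsupp.add_apply]
      rw [Finsupp.single_eq_of_ne (by decide), hq.1]
      exact zero_mem _
  · rw [map_sum] at h2
    obtain ⟨j, _, hj⟩ := Finset.exists_ne_zero_of_sum_ne_zero h2
    refine mul_supp (P := fun q => q 0 = 0 ∧ q 2 = 0) (Q := fun q => q = single 0 (e j))
      (R := fun m => m 2 = 0 ∧ 1 ≤ m 0 + m 1 ∧ m 0 ∈ Sgrp e)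
      ?_ (embY_supp (A j)) (X_pow_supp 0 (e j)) p hj
    intro p q hp hq
    subst hq
    refine ⟨?_, ?_, ?_⟩
    · simp [Finsupp.add_apply, hp.2]
    · simp only [Finsupp.add_apply, Finsupp.single_eq_same]
      have := he j
      omega
    · simp only [Finsupp.add_apply, Finsupp.single_eq_same]
      rw [hp.1, zero_add]
      exact mem_Sgrp e j

theorem Wpow_supp (lam : PowerSeries k) (A : Fin n → PowerSeries k) (e : Fin n → ℕ)
    (he : ∀ j, 0 < e j) (b : ℕ) (p : Fin 3 →₀ ℕ)
    (h : MvPowerSeries.coeff p ((Wser lam A e) ^ b) ≠ 0) :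
    p 2 = 0 ∧ b ≤ p 0 + p 1 ∧ p 0 ∈ Sgrp e := by
  induction b generalizing p with
  | zero =>
    rw [pow_zero] at h
    have := one_supp p h
    subst this
    simp [zero_mem]
  | succ b ih =>
    rw [pow_succ] at h
    refine mul_supp (P := fun p => p 2 = 0 ∧ b ≤ p 0 + p 1 ∧ p 0 ∈ Sgrp e)
      (Q := fun p => p 2 = 0 ∧ 1 ≤ p 0 + p 1 ∧ p 0 ∈ Sgrp e)
      (R := fun p => p 2 = 0 ∧ b + 1 ≤ p 0 + p 1 ∧ p 0 ∈ Sgrp e) ?_ ih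
      (Wser_supp lam A e he) p h
    intro p q hp hq
    refine ⟨?_, ?_, ?_⟩
    · simp [Finsupp.add_apply, hp.1, hq.1]
    · simp only [Finsupp.add_apply]
      have := hp.2.1; have := hq.2.1
      omega
    · simp only [Finsupp.add_apply]
      exact add_mem hp.2.2 hq.2.2

theorem WX_supp (lam : PowerSeries k) (A : Fin n → PowerSeries k) (e : Fin n → ℕ)
    (he : ∀ j, 0 < e j) (a b : ℕ) (p : Fin 3 →₀ ℕ)
    (h : MvPowerSeries.coeff p ((Wser lam A e) ^ b * (MvPowerSeries.X 0) ^ a) ≠ 0) :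
    p 2 = 0 ∧ a ≤ p 0 ∧ a + b ≤ p 0 + p 1 ∧ p 0 - a ∈ Sgrp e := by
  rw [coeff_mul_X_pow] at h
  by_cases hle : a ≤ p 0
  · rw [if_pos hle] at h
    have := Wpow_supp lam A e he b _ h
    rw [tsub_apply, tsub_apply, tsub_apply] at this
    rw [single_eq_same] at this
    have e1 : single (0 : Fin 3) a 1 = 0 := by simp
    have e2 : single (0 : Fin 3) a 2 = 0 := by simp
    rw [e1, e2] at this
    refine ⟨by omega, hle, by omega, this.2.2⟩
  · rw [if_neg hle] at h; exact absurd rfl h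

/-- the monomial `x^a y^b` as an exponent vector -/
noncomputable def mon (a b : ℕ) : Fin 3 →₀ ℕ := single 0 a + single 1 b

theorem mon_zero (a b : ℕ) : mon a b 0 = a := by
  simp [mon, Finsupp.add_apply, Finsupp.single_eq_of_ne (show (1:Fin 3) ≠ 0 by decide)]

theorem mon_one (a b : ℕ) : mon a b 1 = b := by
  simp [mon, Finsupp.add_apply, Finsupp.single_eq_of_ne (show (0:Fin 3) ≠ 1 by decide)]

theorem mon_two (a b : ℕ) : mon a b 2 = 0 := by
  simp [mon, Finsupp.add_apply, Finsupp.single_eq_of_ne (show (0:Fin 3) ≠ 2 by decide),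
    Finsupp.single_eq_of_ne (show (1:Fin 3) ≠ 2 by decide)]

theorem eq_mon (m : Fin 3 →₀ ℕ) (h2 : m 2 = 0) : m = mon (m 0) (m 1) := by
  ext i
  rcases i with ⟨iv, hiv⟩
  interval_cases iv
  · exact (mon_zero _ _).symm
  · exact (mon_one _ _).symm
  · exact h2.trans (mon_two _ _).symm

theorem mon_zero_zero : mon 0 0 = 0 := by
  simp [mon]

/-- the diagonal coefficient -/
theorem diag_coeff (lam : PowerSeries k) (A : Fin n → PowerSeries k) (e : Fin n → ℕ)
    (he : ∀ j, 0 < e j) (a b : ℕ) :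
    MvPowerSeries.coeff (mon a b) ((Wser lam A e) ^ b * (MvPowerSeries.X 0) ^ a) =
      (PowerSeries.constantCoeff lam) ^ b := by
  rw [coeff_mul_X_pow, if_pos (by rw [mon_zero])]
  have hsub : mon a b - single 0 a = single 1 b := by
    ext i
    rcases i with ⟨iv, hiv⟩
    interval_cases iv
    · show (mon a b) 0 - (single (0:Fin 3) a) 0 = (single (1:Fin 3) b) 0
      rw [mon_zero, single_eq_same, Finsupp.single_eq_of_ne' (show (1:Fin 3) ≠ 0 by decide)]
      omega
    · show (mon a b) 1 - (single (0:Fin 3) a) 1 = (single (1:Fin 3) b) 1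
      rw [mon_one, single_eq_same, Finsupp.single_eq_of_ne' (show (0:Fin 3) ≠ 1 by decide)]
      omega
    · show (mon a b) 2 - (single (0:Fin 3) a) 2 = (single (1:Fin 3) b) 2
      rw [mon_two, Finsupp.single_eq_of_ne' (show (0:Fin 3) ≠ 2 by decide),
        Finsupp.single_eq_of_ne' (show (1:Fin 3) ≠ 2 by decide)]
      omega
  rw [hsub]
  -- now compute coeff (single 1 b) (W ^ b)
  have hV : (MvPowerSeries.X 0 : MvPowerSeries (Fin 3) k) ∣
      Wser lam A e - MvPowerSeries.X 1 * embY lam := by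
    unfold Wser
    rw [add_sub_cancel_left]
    refine Finset.dvd_sum ?_
    intro j _
    exact Dvd.dvd.mul_left (dvd_pow_self _ (he j).ne') _
  obtain ⟨t, ht⟩ := dvd_trans hV (sub_dvd_pow_sub_pow (Wser lam A e)
    (MvPowerSeries.X 1 * embY lam) b)
  have hW : (Wser lam A e) ^ b =
      (MvPowerSeries.X 1 * embY lam) ^ b + MvPowerSeries.X 0 * t := by
    rw [← ht]; ring
  rw [hW, map_add]
  have h0 : MvPowerSeries.coeff (single 1 b) (MvPowerSeries.X 0 * t) = 0 := by
    rw [mul_comm, ← pow_one (MvPowerSeries.X 0 : MvPowerSeries (Fin 3) k),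
      coeff_mul_X_pow, if_neg]
    rw [Finsupp.single_eq_of_ne' (show (1:Fin 3) ≠ 0 by decide)]
    omega
  rw [h0, add_zero, mul_pow, mul_comm, coeff_mul_X_pow, if_pos (by rw [single_eq_same])]
  rw [tsub_self]
  rw [MvPowerSeries.coeff_zero_eq_constantCoeff, map_pow]
  congr 1
  rw [← MvPowerSeries.coeff_zero_eq_constantCoeff, MvPowerSeries.coeff_apply]
  unfold embY
  rw [if_pos (by simp)]
  simp

open Classical in
/-- the finite set of "earlier" pairs -/
noncomputable def priorF (S : Set ℕ) (a b : ℕ) : Finset (ℕ × ℕ) :=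
  ((Finset.range (a+1)) ×ˢ (Finset.range (a+b+1))).filter
    (fun q => q.1 ∈ S ∧ (q.1 < a ∨ q.2 < b))

open Classical in
/-- the coefficients of the series `P`, defined by a triangular recursion -/
noncomputable def cf (S : Set ℕ) (w : ℕ → ℕ → ℕ → ℕ → k) (Y : ℕ → ℕ → k) (lam0 : k) :
    ℕ → ℕ → k
  | a, b =>
    if a ∈ S then
      (Y a b - ∑ q ∈ (priorF S a b).attach, cf S w Y lam0 q.1.1 q.1.2 * w q.1.1 q.1.2 a b)
        * lam0⁻¹ ^ b
    else 0
termination_by a b => (a, b)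
decreasing_by
  have h := q.2
  simp only [priorF, Finset.mem_filter, Finset.mem_product, Finset.mem_range] at h
  rcases h.2.2 with h' | h'
  · exact Prod.Lex.left _ _ h'
  · rcases Nat.lt_or_ge q.1.1 a with h1 | h1
    · exact Prod.Lex.left _ _ h1
    · have : q.1.1 = a := by omega
      rw [this]
      exact Prod.Lex.right _ h'

theorem cf_spec (S : Set ℕ) (w : ℕ → ℕ → ℕ → ℕ → k) (Y : ℕ → ℕ → k) (lam0 : k)
    (hl : lam0 ≠ 0) (a b : ℕ) (ha : a ∈ S) :
    cf S w Y lam0 a b * lam0 ^ b =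
      Y a b - ∑ q ∈ priorF S a b, cf S w Y lam0 q.1 q.2 * w q.1 q.2 a b := by
  rw [cf, if_pos ha, Finset.sum_attach (priorF S a b)
    (fun q => cf S w Y lam0 q.1 q.2 * w q.1 q.2 a b)]
  rw [mul_assoc, ← mul_pow, inv_mul_cancel₀ hl, one_pow, mul_one]

theorem cf_zero (S : Set ℕ) (w : ℕ → ℕ → ℕ → ℕ → k) (Y : ℕ → ℕ → k) (lam0 : k)
    (hY : Y 0 0 = 0) : cf S w Y lam0 0 0 = 0 := by
  classical
  have hp : priorF S 0 0 = ∅ := by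
    rw [priorF]
    apply Finset.filter_false_of_mem
    intro q hq
    rw [Finset.mem_product, Finset.mem_range, Finset.mem_range] at hq
    push_neg
    intro _
    omega
  rw [cf]
  split
  · rw [hp]
    simp [hY]
  · rfl

end IterSub

open IterSub Finsupp

/-- Let `k` be a field, `λ ∈ k⟦y⟧` a unit, `A₁, …, Aₙ ∈ k⟦y⟧`, `e₁, …, eₙ, e` positive
integers, `B ∈ k⟦x,y,z⟧`, and set `ȳ = y·λ(y) + Σ_j A_j(y)·x^{e_j} + x^e·B`. Then there
exist a power series `P ∈ k⟦Y,T₁,…,Tₙ⟧` with zero constant term and `Ω ∈ k⟦x,y,z⟧` with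
`y = P(ȳ, x^{e₁}, …, x^{eₙ}) + x^e·Ω`. -/
theorem exists_inverse_series_by_iterated_substitution
    (k : Type*) [Field k] (n : ℕ)
    (lam : PowerSeries k) (hlam : IsUnit lam)
    (A : Fin n → PowerSeries k)
    (e : Fin n → ℕ) (he : ∀ j, 0 < e j) (e₀ : ℕ) (he₀ : 0 < e₀)
    (B : MvPowerSeries (Fin 3) k)
    (ybar : MvPowerSeries (Fin 3) k)
    (hybar : ybar = MvPowerSeries.X 1 * embY lam +
      (∑ j : Fin n, embY (A j) * (MvPowerSeries.X 0) ^ (e j)) +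
      (MvPowerSeries.X 0) ^ e₀ * B) :
    ∃ (P : MvPowerSeries (Fin (n + 1)) k) (Ω : MvPowerSeries (Fin 3) k),
      MvPowerSeries.constantCoeff (σ := Fin (n + 1)) (R := k) P = 0 ∧
      (MvPowerSeries.X 1 : MvPowerSeries (Fin 3) k) =
        substFam P (Fin.cons ybar (fun j => (MvPowerSeries.X 0) ^ (e j))) +
          (MvPowerSeries.X 0) ^ e₀ * Ω := by
  classical
  have hybar' : ybar = Wser lam A e + (MvPowerSeries.X 0) ^ e₀ * B := hybar
  set lam0 := PowerSeries.constantCoeff lam with hl0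
  have hlne : lam0 ≠ 0 := (hlam.map PowerSeries.constantCoeff).ne_zero
  set Ss : Set ℕ := ↑(Sgrp e) with hSs
  set wc : ℕ → ℕ → ℕ → ℕ → k := fun a' b' a b =>
    MvPowerSeries.coeff (mon a b) ((Wser lam A e) ^ b' * (MvPowerSeries.X 0) ^ a') with hwc
  set Yc : ℕ → ℕ → k := fun a b =>
    MvPowerSeries.coeff (mon a b) (MvPowerSeries.X 1 : MvPowerSeries (Fin 3) k) with hYc
  set c : ℕ → ℕ → k := cf Ss wc Yc lam0 with hc
  set degp : (Fin (n+1) →₀ ℕ) → ℕ := fun p => ∑ j : Fin n, e j * p j.succ with hdegp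
  set P : MvPowerSeries (Fin (n+1)) k :=
    fun p => if (fun j : Fin n => p j.succ) = repf e (degp p) then c (degp p) (p 0) else 0
    with hP
  set Af : Fin (n+1) → MvPowerSeries (Fin 3) k :=
    Fin.cons ybar (fun j => (MvPowerSeries.X 0) ^ (e j)) with hAf
  have hdeg_mem : ∀ p : Fin (n+1) →₀ ℕ, degp p ∈ Sgrp e := by
    intro p
    show ∑ j : Fin n, e j * p j.succ ∈ Sgrp e
    refine sum_mem (fun j _ => ?_)
    have := nsmul_mem (mem_Sgrp e j) (p j.succ)
    rwa [nsmul_eq_mul, mul_comm] at this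
  set iota : ℕ × ℕ → (Fin (n+1) →₀ ℕ) :=
    fun q => Finsupp.equivFunOnFinite.symm (Fin.cons q.2 (repf e q.1)) with hiota
  have hi0 : ∀ q, iota q 0 = q.2 := by
    intro q
    rw [hiota]
    simp [Finsupp.equivFunOnFinite_symm_apply_apply, Fin.cons_zero]
  have his : ∀ q (j : Fin n), iota q j.succ = repf e q.1 j := by
    intro q j
    rw [hiota]
    simp [Finsupp.equivFunOnFinite_symm_apply_apply, Fin.cons_succ]
  have hdegi : ∀ a b : ℕ, a ∈ Sgrp e → degp (iota (a, b)) = a := by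
    intro a b ha
    show ∑ j : Fin n, e j * iota (a, b) j.succ = a
    have hh : ∀ j : Fin n, iota (a, b) j.succ = repf e a j := fun j => his (a, b) j
    simp only [hh]
    exact repf_spec e a ha
  have hprod : ∀ p : Fin (n+1) →₀ ℕ,
      (∏ j, (Af j) ^ (p j)) = ybar ^ (p 0) * (MvPowerSeries.X 0) ^ (degp p) := by
    intro p
    rw [hAf, Fin.prod_univ_succ, Fin.cons_zero]
    have hrest : (∏ i : Fin n,
        ((Fin.cons ybar (fun j => (MvPowerSeries.X 0) ^ e j) :
          Fin (n+1) → MvPowerSeries (Fin 3) k) i.succ) ^ p i.succ) =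
        (MvPowerSeries.X 0 : MvPowerSeries (Fin 3) k) ^ degp p := by
      simp only [Fin.cons_succ, ← pow_mul]
      rw [Finset.prod_pow_eq_pow_sum]
    rw [hrest]
  have hmod : ∀ (m : Fin 3 →₀ ℕ), m 0 < e₀ → ∀ b a : ℕ,
      MvPowerSeries.coeff m (ybar ^ b * (MvPowerSeries.X 0) ^ a) =
        MvPowerSeries.coeff m ((Wser lam A e) ^ b * (MvPowerSeries.X 0) ^ a) := by
    intro m hm b a
    have hdvd : (MvPowerSeries.X 0 : MvPowerSeries (Fin 3) k) ^ e₀ ∣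
        ybar ^ b - (Wser lam A e) ^ b :=
      dvd_trans ⟨B, by rw [hybar']; ring⟩ (sub_dvd_pow_sub_pow ybar (Wser lam A e) b)
    obtain ⟨t, ht⟩ := hdvd
    have heq : ybar ^ b * (MvPowerSeries.X 0) ^ a =
        (Wser lam A e) ^ b * (MvPowerSeries.X 0) ^ a +
          (t * (MvPowerSeries.X 0) ^ a) * (MvPowerSeries.X 0) ^ e₀ := by
      have h2 : ybar ^ b = (Wser lam A e) ^ b + (MvPowerSeries.X 0) ^ e₀ * t := by
        rw [← ht]; ring
      rw [h2]; ring
    have h0 : MvPowerSeries.coeff m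
        ((t * (MvPowerSeries.X 0) ^ a) * (MvPowerSeries.X 0) ^ e₀) = 0 := by
      rw [coeff_mul_X_pow, if_neg (by omega)]
    rw [heq, map_add, h0, add_zero]
  have key : ∀ m : Fin 3 →₀ ℕ, m 0 < e₀ →
      MvPowerSeries.coeff m (MvPowerSeries.X 1 : MvPowerSeries (Fin 3) k) =
        MvPowerSeries.coeff m (substFam P Af) := by
    intro m hm
    have hsf : MvPowerSeries.coeff m (substFam P Af) =
        ∑ᶠ p : Fin (n+1) →₀ ℕ, MvPowerSeries.coeff p P *
          MvPowerSeries.coeff m ((Wser lam A e) ^ (p 0) * (MvPowerSeries.X 0) ^ (degp p)) := by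
      rw [MvPowerSeries.coeff_apply]
      unfold substFam
      apply finsum_congr
      intro p
      rw [hprod p, hmod m hm]
    rw [hsf]
    set g : (Fin (n+1) →₀ ℕ) → k := fun p => MvPowerSeries.coeff p P *
        MvPowerSeries.coeff m ((Wser lam A e) ^ (p 0) * (MvPowerSeries.X 0) ^ (degp p))
      with hg
    set grid : Finset (ℕ × ℕ) :=
      ((Finset.range (m 0 + 1)) ×ˢ (Finset.range (m 0 + m 1 + 1))).filter
        (fun q => q.1 ∈ Sgrp e) with hgrid
    have hsupp : Function.support g ⊆ ↑(grid.image iota) := by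
      intro p hp
      have hp' : g p ≠ 0 := hp
      simp only [hg] at hp'
      have h1 : MvPowerSeries.coeff p P ≠ 0 := left_ne_zero_of_mul hp'
      have h2 : MvPowerSeries.coeff m
          ((Wser lam A e) ^ (p 0) * (MvPowerSeries.X 0) ^ (degp p)) ≠ 0 :=
        right_ne_zero_of_mul hp'
      have hrep : (fun j : Fin n => p j.succ) = repf e (degp p) := by
        by_contra hcon
        rw [MvPowerSeries.coeff_apply] at h1
        simp only [hP] at h1
        rw [if_neg hcon] at h1
        exact h1 rfl
      have hWX := WX_supp lam A e he (degp p) (p 0) m h2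
      rw [Finset.coe_image]
      refine ⟨(degp p, p 0), ?_, ?_⟩
      · rw [Finset.mem_coe, hgrid, Finset.mem_filter, Finset.mem_product,
          Finset.mem_range, Finset.mem_range]
        have := hWX.2.1
        have := hWX.2.2.1
        exact ⟨⟨by omega, by omega⟩, hdeg_mem p⟩
      · ext i
        induction i using Fin.cases with
        | zero => rw [hi0]
        | succ j => rw [his]; exact (congrFun hrep j).symm
    rw [finsum_eq_sum_of_support_subset g hsupp]
    have hinj : ∀ q1 ∈ grid, ∀ q2 ∈ grid, iota q1 = iota q2 → q1 = q2 := by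
      intro q1 h1 q2 h2 heq
      have m1 : q1.1 ∈ Sgrp e := (Finset.mem_filter.mp h1).2
      have m2 : q2.1 ∈ Sgrp e := (Finset.mem_filter.mp h2).2
      have e2 : q1.2 = q2.2 := by rw [← hi0 q1, ← hi0 q2, heq]
      have e1 : q1.1 = q2.1 := by
        calc q1.1 = ∑ j, e j * repf e q1.1 j := (repf_spec e q1.1 m1).symm
          _ = ∑ j, e j * repf e q2.1 j := by
              refine Finset.sum_congr rfl (fun j _ => ?_)
              rw [← his q1 j, ← his q2 j, heq]
          _ = q2.1 := repf_spec e q2.1 m2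
      exact Prod.ext e1 e2
    rw [Finset.sum_image hinj]
    have hgi : ∀ q ∈ grid, g (iota q) =
        c q.1 q.2 * MvPowerSeries.coeff m
          ((Wser lam A e) ^ q.2 * (MvPowerSeries.X 0) ^ q.1) := by
      intro q hq
      have hq1 : q.1 ∈ Sgrp e := (Finset.mem_filter.mp hq).2
      have hd : degp (iota q) = q.1 := hdegi q.1 q.2 hq1
      have h0 : iota q 0 = q.2 := hi0 q
      simp only [hg]
      have hPval : MvPowerSeries.coeff (iota q) P = c q.1 q.2 := by
        rw [MvPowerSeries.coeff_apply]
        simp only [hP]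
        rw [if_pos (by rw [hd]; funext j; exact his q j)]
        rw [hd, h0]
      rw [hPval, hd, h0]
    rw [Finset.sum_congr rfl hgi]
    by_cases hm2 : m 2 = 0
    · have hmeq : m = mon (m 0) (m 1) := eq_mon m hm2
      have hwcs : ∀ q ∈ grid, c q.1 q.2 * MvPowerSeries.coeff m
            ((Wser lam A e) ^ q.2 * (MvPowerSeries.X 0) ^ q.1) =
          c q.1 q.2 * wc q.1 q.2 (m 0) (m 1) := by
        intro q _
        simp only [hwc]
        rw [← hmeq]
      rw [Finset.sum_congr rfl hwcs]
      have hYe : MvPowerSeries.coeff m (MvPowerSeries.X 1 : MvPowerSeries (Fin 3) k) =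
          Yc (m 0) (m 1) := by simp only [hYc]; rw [← hmeq]
      rw [hYe]
      by_cases haS : m 0 ∈ Sgrp e
      · have hsub : insert (m 0, m 1) (priorF Ss (m 0) (m 1)) ⊆ grid := by
          intro q hq
          rcases Finset.mem_insert.mp hq with h | h
          · subst h
            rw [hgrid, Finset.mem_filter, Finset.mem_product, Finset.mem_range,
              Finset.mem_range]
            exact ⟨⟨by omega, by omega⟩, haS⟩
          · rw [priorF, Finset.mem_filter, Finset.mem_product] at h
            rw [hgrid, Finset.mem_filter, Finset.mem_product]
            exact ⟨h.1, h.2.1⟩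
        have hzero : ∀ q ∈ grid, q ∉ insert (m 0, m 1) (priorF Ss (m 0) (m 1)) →
            c q.1 q.2 * wc q.1 q.2 (m 0) (m 1) = 0 := by
          intro q hq hnq
          rw [hgrid, Finset.mem_filter, Finset.mem_product, Finset.mem_range,
            Finset.mem_range] at hq
          rw [Finset.mem_insert] at hnq
          push_neg at hnq
          have hq1S : q.1 ∈ Ss := hq.2
          have hnp : ¬(q.1 < m 0 ∨ q.2 < m 1) := by
            intro hcon
            exact hnq.2 (by
              rw [priorF, Finset.mem_filter, Finset.mem_product, Finset.mem_range,
                Finset.mem_range]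
              exact ⟨⟨hq.1.1, hq.1.2⟩, hq1S, hcon⟩)
          push_neg at hnp
          have hq1 : q.1 = m 0 := by omega
          have hq2 : m 1 < q.2 := by
            rcases Nat.lt_or_ge (m 1) q.2 with h | h
            · exact h
            · exfalso
              apply hnq.1
              have : q.2 = m 1 := by omega
              rw [Prod.ext_iff]
              exact ⟨hq1, this⟩
          have hwz : wc q.1 q.2 (m 0) (m 1) = 0 := by
            by_contra hne
            simp only [hwc] at hne
            have := WX_supp lam A e he q.1 q.2 (mon (m 0) (m 1)) hne
            rw [mon_zero, mon_one] at this
            omega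
          rw [hwz, mul_zero]
        rw [← Finset.sum_subset hsub hzero]
        have hnotmem : (m 0, m 1) ∉ priorF Ss (m 0) (m 1) := by
          rw [priorF, Finset.mem_filter]
          rintro ⟨-, -, hcon⟩
          omega
        rw [Finset.sum_insert hnotmem]
        have hdiag : wc (m 0) (m 1) (m 0) (m 1) = lam0 ^ (m 1) := by
          simp only [hwc]
          exact diag_coeff lam A e he (m 0) (m 1)
        rw [hdiag]
        have hspec := cf_spec Ss wc Yc lam0 hlne (m 0) (m 1) haS
        rw [← hc] at hspec
        rw [hspec]
        ring
      · -- m 0 ∉ S : both sides vanish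
        have hY0 : Yc (m 0) (m 1) = 0 := by
          simp only [hYc]
          rw [MvPowerSeries.coeff_X, if_neg]
          intro hcon
          apply haS
          have h0 : mon (m 0) (m 1) 0 = (single (1:Fin 3) 1 : Fin 3 →₀ ℕ) 0 := by rw [hcon]
          rw [mon_zero, Finsupp.single_eq_of_ne' (show (1:Fin 3) ≠ 0 by decide)] at h0
          rw [h0]
          exact zero_mem _
        rw [hY0]
        refine (Finset.sum_eq_zero (fun q hq => ?_)).symm
        have hq1 : q.1 ∈ Sgrp e := (Finset.mem_filter.mp hq).2
        have hwz : wc q.1 q.2 (m 0) (m 1) = 0 := by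
          by_contra hne
          simp only [hwc] at hne
          have h := WX_supp lam A e he q.1 q.2 (mon (m 0) (m 1)) hne
          rw [mon_zero] at h
          apply haS
          have : m 0 = q.1 + (m 0 - q.1) := by omega
          rw [this]
          exact add_mem hq1 h.2.2.2
        rw [hwz, mul_zero]
    · -- m 2 ≠ 0 : both sides vanish
      have hY0 : MvPowerSeries.coeff m (MvPowerSeries.X 1 : MvPowerSeries (Fin 3) k) = 0 := by
        rw [MvPowerSeries.coeff_X, if_neg]
        intro hcon
        apply hm2
        rw [hcon]
        exact Finsupp.single_eq_of_ne (by decide)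
      rw [hY0]
      refine (Finset.sum_eq_zero (fun q hq => ?_)).symm
      have hwz : MvPowerSeries.coeff m
          ((Wser lam A e) ^ q.2 * (MvPowerSeries.X 0) ^ q.1) = 0 := by
        by_contra hne
        exact hm2 (WX_supp lam A e he q.1 q.2 m hne).1
      rw [hwz, mul_zero]
  -- assemble
  set D : MvPowerSeries (Fin 3) k :=
    (MvPowerSeries.X 1 : MvPowerSeries (Fin 3) k) - substFam P Af with hD
  set Om : MvPowerSeries (Fin 3) k := fun m => D (m + single 0 e₀) with hOm
  refine ⟨P, Om, ?_, ?_⟩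
  · rw [← MvPowerSeries.coeff_zero_eq_constantCoeff, MvPowerSeries.coeff_apply]
    simp only [hP]
    have hd0 : degp (0 : Fin (n+1) →₀ ℕ) = 0 := by
      show ∑ j : Fin n, e j * (0 : Fin (n+1) →₀ ℕ) j.succ = 0
      simp
    have hY00 : Yc 0 0 = 0 := by
      simp only [hYc]
      rw [mon_zero_zero]
      exact MvPowerSeries.coeff_zero_X 1
    have hc00 : c 0 0 = 0 := by
      rw [hc]
      exact cf_zero Ss wc Yc lam0 hY00
    split
    · rw [hd0]
      have hz : ((0 : Fin (n+1) →₀ ℕ) : Fin (n+1) → ℕ) 0 = 0 := rfl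
      rw [hz, hc00]
    · rfl
  · apply MvPowerSeries.ext
    intro m
    rw [map_add]
    have hXOm : MvPowerSeries.coeff m ((MvPowerSeries.X 0) ^ e₀ * Om) =
        if e₀ ≤ m 0 then D m else 0 := by
      rw [mul_comm, coeff_mul_X_pow]
      by_cases hle : e₀ ≤ m 0
      · rw [if_pos hle, if_pos hle, MvPowerSeries.coeff_apply]
        simp only [hOm]
        have harith : (m - single 0 e₀) + single 0 e₀ = m := by
          ext i
          rcases i with ⟨iv, hiv⟩
          interval_cases iv
          · show m 0 - (single (0:Fin 3) e₀) 0 + (single (0:Fin 3) e₀) 0 = m 0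
            rw [single_eq_same]
            omega
          · show m 1 - (single (0:Fin 3) e₀) 1 + (single (0:Fin 3) e₀) 1 = m 1
            rw [Finsupp.single_eq_of_ne' (show (0:Fin 3) ≠ 1 by decide)]
            omega
          · show m 2 - (single (0:Fin 3) e₀) 2 + (single (0:Fin 3) e₀) 2 = m 2
            rw [Finsupp.single_eq_of_ne' (show (0:Fin 3) ≠ 2 by decide)]
            omega
        rw [harith]
      · rw [if_neg hle, if_neg hle]
    by_cases hle : e₀ ≤ m 0
    · rw [hXOm, if_pos hle]
      have hDm : D m = MvPowerSeries.coeff m (MvPowerSeries.X 1 : MvPowerSeries (Fin 3) k) -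
          MvPowerSeries.coeff m (substFam P Af) := by
        show MvPowerSeries.coeff m D = _
        rw [hD, map_sub]
      rw [hDm]
      ring
    · rw [hXOm, if_neg hle, add_zero]
      exact key m (by omega)
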